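/- arXiv:1412.3280 — 5 statements merged into one kernel-verified Lean document; each statement's English description precedes it below -/
import Mathlib

section
/- Let R > 0 and h > 0, and let γ : ℝ → ℝ³ be the helix γ(β) = (R cos β, R sin β, (h/2π)β). Then for every point p = (x, y, z) ∈ ℝ³ with x² + y² < R², there exists a unique triple (β₁, β₂, t) with β₁ < β₂ < β₁ + 2π and t ∈ (0, 1) such that p = (1 − t)·γ(β₁) + t·γ(β₂). In other words, every point strictly inside the helix cylinder lies on exactly one PI-line of the helix. -/
/-!
Describe a chord of the helix by its mid-angle `m`, half-angle `δ ∈ (0, π)` and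
`u = 1 - 2t ∈ (-1, 1)`. After scaling to `R = 1`, `h = 2π` and rotating by `-m`, the point of
the chord has horizontal coordinates `(cos δ, u sin δ)` and height `m - uδ`. Hence for `(a, b)` in
the open unit disc with rotated coordinates `P(m), Q(m)`, the angle `m` forces `δ = arccos P(m)`
and `u = Q(m) / sin δ`, and what remains is the single equation
`m - Q(m) · arccos P(m) / √(1 - P(m)²) = Z`. Its left side stays within bounded distance of `m`,
and its derivative factors as
`(1 - P arccos P / √(1 - P²)) (1 - Q² / (1 - P²)) > 0` (the first factor is positive because
`δ cos δ < sin δ` on `(0, π)`), so it is a bijection of `ℝ`.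
-/

open Real Filter

theorem surjective_of_abs_sub_le {f : ℝ → ℝ} (hf : Continuous f) {C : ℝ}
    (hC : ∀ x, |f x - x| ≤ C) : Function.Surjective f := by
  refine hf.surjective ?_ ?_
  · refine tendsto_atTop_mono (fun x => ?_) (tendsto_atTop_add_const_right _ (-C) tendsto_id)
    linarith [(abs_le.1 (hC x)).1, id_eq x]
  · refine tendsto_atBot_mono (fun x => ?_) (tendsto_atBot_add_const_right _ C tendsto_id)
    linarith [(abs_le.1 (hC x)).2, id_eq x]

theorem mul_cos_lt_sin {δ : ℝ} (h0 : 0 < δ) (hπ : δ < π) : δ * cos δ < sin δ := by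
  have hsin : 0 < sin δ := sin_pos_of_pos_of_lt_pi h0 hπ
  rcases lt_or_ge δ (π / 2) with hδ | hδ
  · have hcos : 0 < cos δ := cos_pos_of_mem_Ioo ⟨by linarith, hδ⟩
    have := lt_tan h0 hδ
    rwa [tan_eq_sin_div_cos, lt_div_iff₀ hcos] at this
  · have : cos δ ≤ 0 := cos_nonpos_of_pi_div_two_le_of_le hδ (by linarith)
    nlinarith

noncomputable def arccosDivSqrt (v : ℝ) : ℝ := arccos v / √(1 - v ^ 2)

theorem arccosDivSqrt_nonneg (v : ℝ) : 0 ≤ arccosDivSqrt v :=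
  div_nonneg (arccos_nonneg v) (sqrt_nonneg _)

theorem arccosDivSqrt_cos {δ : ℝ} (h0 : 0 ≤ δ) (hπ : δ ≤ π) :
    arccosDivSqrt (cos δ) = δ / sin δ := by
  rw [arccosDivSqrt, arccos_cos h0 hπ, ← sin_sq, sqrt_sq (sin_nonneg_of_nonneg_of_le_pi h0 hπ)]

theorem arccosDivSqrt_le {v r : ℝ} (hv : v ^ 2 ≤ r) (hr : r < 1) :
    arccosDivSqrt v ≤ π / √(1 - r) :=
  div_le_div₀ pi_pos.le (arccos_le_pi v) (sqrt_pos.2 (by linarith))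
    (sqrt_le_sqrt (by linarith))

theorem mul_arccosDivSqrt_lt_one {v : ℝ} (h1 : -1 < v) (h2 : v < 1) :
    v * arccosDivSqrt v < 1 := by
  have h0 : 0 < arccos v := arccos_pos.2 h2
  have hπ : arccos v < π := arccos_lt_pi.2 h1
  have := mul_cos_lt_sin h0 hπ
  rw [← cos_arccos h1.le h2.le, arccosDivSqrt_cos h0.le hπ.le, mul_div_assoc',
    div_lt_one (sin_pos_of_pos_of_lt_pi h0 hπ)]
  linarith

theorem hasDerivAt_arccosDivSqrt {v : ℝ} (h1 : -1 < v) (h2 : v < 1) :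
    HasDerivAt arccosDivSqrt ((v * arccosDivSqrt v - 1) / (1 - v ^ 2)) v := by
  have hv : 0 < 1 - v ^ 2 := by nlinarith
  have hs : 0 < √(1 - v ^ 2) := sqrt_pos.2 hv
  have hsq : √(1 - v ^ 2) ^ 2 = 1 - v ^ 2 := sq_sqrt hv.le
  have hsqrt : HasDerivAt (fun w => √(1 - w ^ 2)) (-(2 * v) / (2 * √(1 - v ^ 2))) v := by
    simpa using ((hasDerivAt_pow 2 v).const_sub 1).sqrt hv.ne'
  refine ((hasDerivAt_arccos h1.ne' h2.ne).div hsqrt hs.ne').congr_deriv ?_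
  rw [hsq, arccosDivSqrt]
  field_simp
  ring

noncomputable def piLineHeight (a b m : ℝ) : ℝ :=
  m - (a * sin m - b * cos m) * arccosDivSqrt (a * cos m + b * sin m)

theorem rotate_sq_add_sq (a b m : ℝ) :
    (a * cos m + b * sin m) ^ 2 + (a * sin m - b * cos m) ^ 2 = a ^ 2 + b ^ 2 := by
  linear_combination (a ^ 2 + b ^ 2) * sin_sq_add_cos_sq m

theorem rotation_eq_iff {a b c s p q : ℝ} (hcs : s ^ 2 + c ^ 2 = 1) :
    (a = c * p + s * q ∧ b = s * p - c * q) ↔ (a * c + b * s = p ∧ a * s - b * c = q) := by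
  constructor
  · rintro ⟨rfl, rfl⟩
    exact ⟨by linear_combination p * hcs, by linear_combination q * hcs⟩
  · rintro ⟨rfl, rfl⟩
    exact ⟨by linear_combination -a * hcs, by linear_combination -b * hcs⟩

section
variable {a b : ℝ}

theorem hasDerivAt_piLineHeight (hab : a ^ 2 + b ^ 2 < 1) (m : ℝ) :
    HasDerivAt (piLineHeight a b)
      ((1 - (a * cos m + b * sin m) * arccosDivSqrt (a * cos m + b * sin m)) *
        (1 - (a * sin m - b * cos m) ^ 2 / (1 - (a * cos m + b * sin m) ^ 2))) m := by
  have hdP : HasDerivAt (fun m => a * cos m + b * sin m) (-(a * sin m - b * cos m)) m := by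
    refine (((hasDerivAt_cos m).const_mul a).add ((hasDerivAt_sin m).const_mul b)).congr_deriv ?_
    ring
  have hdQ : HasDerivAt (fun m => a * sin m - b * cos m) (a * cos m + b * sin m) m := by
    refine (((hasDerivAt_sin m).const_mul a).sub ((hasDerivAt_cos m).const_mul b)).congr_deriv ?_
    ring
  have hPQ := rotate_sq_add_sq a b m
  have hdf := (hasDerivAt_arccosDivSqrt (by nlinarith) (by nlinarith)).comp m hdP
  refine ((hasDerivAt_id m).sub (hdQ.mul hdf)).congr_deriv ?_
  have hP : 1 - (a * cos m + b * sin m) ^ 2 ≠ 0 := by nlinarith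
  simp only [Function.comp_apply]
  field_simp
  ring

theorem strictMono_piLineHeight (hab : a ^ 2 + b ^ 2 < 1) : StrictMono (piLineHeight a b) := by
  refine strictMono_of_deriv_pos fun m => ?_
  rw [(hasDerivAt_piLineHeight hab m).deriv]
  have hPQ := rotate_sq_add_sq a b m
  have hP : 0 < 1 - (a * cos m + b * sin m) ^ 2 := by nlinarith
  refine mul_pos (sub_pos.2 (mul_arccosDivSqrt_lt_one (by nlinarith) (by nlinarith))) ?_
  rw [sub_pos, div_lt_one hP]
  linarith

theorem abs_piLineHeight_sub_le (hab : a ^ 2 + b ^ 2 < 1) (m : ℝ) :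
    |piLineHeight a b m - m| ≤ π / √(1 - (a ^ 2 + b ^ 2)) := by
  have hPQ := rotate_sq_add_sq a b m
  have hQ : |a * sin m - b * cos m| ≤ 1 := abs_le.2 ⟨by nlinarith, by nlinarith⟩
  rw [piLineHeight, sub_sub_cancel_left, abs_neg, abs_mul,
    abs_of_nonneg (arccosDivSqrt_nonneg _)]
  calc _ ≤ 1 * (π / √(1 - (a ^ 2 + b ^ 2))) :=
        mul_le_mul hQ (arccosDivSqrt_le (by nlinarith) hab) (arccosDivSqrt_nonneg _) zero_le_one
    _ = _ := one_mul _

theorem bijective_piLineHeight (hab : a ^ 2 + b ^ 2 < 1) :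
    Function.Bijective (piLineHeight a b) :=
  ⟨(strictMono_piLineHeight hab).injective,
    surjective_of_abs_sub_le
      (continuous_iff_continuousAt.2 fun m => (hasDerivAt_piLineHeight hab m).continuousAt)
      (abs_piLineHeight_sub_le hab)⟩

theorem piLineHeight_eq {m δ u : ℝ} (hδ : δ ∈ Set.Ioo 0 π)
    (hP : a * cos m + b * sin m = cos δ) (hQ : a * sin m - b * cos m = u * sin δ) :
    piLineHeight a b m = m - u * δ := by
  have hsin : sin δ ≠ 0 := (sin_pos_of_pos_of_lt_pi hδ.1 hδ.2).ne'
  rw [piLineHeight, hP, hQ, arccosDivSqrt_cos hδ.1.le hδ.2.le]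
  field_simp

theorem piLine_coords_iff (hab : a ^ 2 + b ^ 2 < 1) {Z m δ u : ℝ} :
    ((δ ∈ Set.Ioo 0 π ∧ u ∈ Set.Ioo (-1) 1) ∧
      a = cos m * cos δ + sin m * (u * sin δ) ∧ b = sin m * cos δ - cos m * (u * sin δ) ∧
      Z = m - u * δ) ↔
    piLineHeight a b m = Z ∧ δ = arccos (a * cos m + b * sin m) ∧
      u = (a * sin m - b * cos m) / sin δ := by
  rw [← and_assoc (c := Z = m - u * δ), rotation_eq_iff (sin_sq_add_cos_sq m)]
  have hPQ := rotate_sq_add_sq a b m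
  constructor
  · rintro ⟨⟨hδ, -⟩, ⟨hP, hQ⟩, rfl⟩
    have hsin : sin δ ≠ 0 := (sin_pos_of_pos_of_lt_pi hδ.1 hδ.2).ne'
    refine ⟨piLineHeight_eq hδ hP hQ, by rw [hP, arccos_cos hδ.1.le hδ.2.le], ?_⟩
    rw [hQ]
    field_simp
  · rintro ⟨rfl, rfl, rfl⟩
    set P := a * cos m + b * sin m
    set Q := a * sin m - b * cos m
    have hP1 : -1 < P := by nlinarith
    have hP2 : P < 1 := by nlinarith
    have hδ : arccos P ∈ Set.Ioo 0 π := ⟨arccos_pos.2 hP2, arccos_lt_pi.2 hP1⟩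
    have hsin : 0 < sin (arccos P) := sin_pos_of_pos_of_lt_pi hδ.1 hδ.2
    have hcos : cos (arccos P) = P := cos_arccos hP1.le hP2.le
    have hQ : Q = Q / sin (arccos P) * sin (arccos P) := (div_mul_cancel₀ Q hsin.ne').symm
    have hu : (Q / sin (arccos P)) ^ 2 < 1 := by
      rw [div_pow, div_lt_one (by positivity), sin_arccos, sq_sqrt (by nlinarith)]
      nlinarith
    exact ⟨⟨hδ, by nlinarith, by nlinarith⟩, ⟨hcos.symm, hQ⟩,
      piLineHeight_eq hδ hcos.symm hQ⟩

theorem existsUnique_piLine_coords (hab : a ^ 2 + b ^ 2 < 1) (Z : ℝ) :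
    ∃! p : ℝ × ℝ × ℝ, (p.2.1 ∈ Set.Ioo 0 π ∧ p.2.2 ∈ Set.Ioo (-1) 1) ∧
      a = cos p.1 * cos p.2.1 + sin p.1 * (p.2.2 * sin p.2.1) ∧
      b = sin p.1 * cos p.2.1 - cos p.1 * (p.2.2 * sin p.2.1) ∧ Z = p.1 - p.2.2 * p.2.1 := by
  obtain ⟨m, hm, hm_unique⟩ := (bijective_piLineHeight hab).existsUnique Z
  refine ⟨(m, arccos (a * cos m + b * sin m),
    (a * sin m - b * cos m) / sin (arccos (a * cos m + b * sin m))),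
    (piLine_coords_iff hab).2 ⟨hm, rfl, rfl⟩, ?_⟩
  rintro ⟨m', δ, u⟩ h
  dsimp only at h
  obtain ⟨hm', rfl, rfl⟩ := (piLine_coords_iff hab).1 h
  obtain rfl := hm_unique m' hm'
  rfl

end

noncomputable def chordOfMidpoint : ℝ × ℝ × ℝ ≃ ℝ × ℝ × ℝ where
  toFun p := (p.1 - p.2.1, p.1 + p.2.1, (1 - p.2.2) / 2)
  invFun q := ((q.1 + q.2.1) / 2, (q.2.1 - q.1) / 2, 1 - 2 * q.2.2)
  left_inv p := by ext <;> dsimp only <;> ring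
  right_inv q := by ext <;> dsimp only <;> ring

theorem helix_chord_midpoint {R h : ℝ} {γ : ℝ → ℝ × ℝ × ℝ}
    (hγ : ∀ β : ℝ, γ β = (R * cos β, R * sin β, h / (2 * π) * β)) (m δ u : ℝ) :
    (1 - (1 - u) / 2) • γ (m - δ) + ((1 - u) / 2) • γ (m + δ) =
      (R * (cos m * cos δ + sin m * (u * sin δ)), R * (sin m * cos δ - cos m * (u * sin δ)),
        h / (2 * π) * (m - u * δ)) := by
  simp only [hγ, cos_add, cos_sub, sin_add, sin_sub, Prod.smul_mk, smul_eq_mul, Prod.mk_add_mk]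
  congr 1 <;> [ring; congr 1 <;> ring]

/-- Helix property: every point strictly inside the helix cylinder lies on
exactly one PI-line of the helix
`γ(β) = (R cos β, R sin β, (h/2π)β)`. -/
theorem helix_pi_line_unique (R h : ℝ) (hR : 0 < R) (hh : 0 < h)
    (γ : ℝ → ℝ × ℝ × ℝ)
    (hγ : ∀ β : ℝ, γ β = (R * Real.cos β, R * Real.sin β, h / (2 * Real.pi) * β))
    (x y z : ℝ) (hp : x ^ 2 + y ^ 2 < R ^ 2) :
    ∃! q : ℝ × ℝ × ℝ,
      (q.1 < q.2.1 ∧ q.2.1 < q.1 + 2 * Real.pi ∧ q.2.2 ∈ Set.Ioo (0 : ℝ) 1) ∧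
      (x, y, z) = (1 - q.2.2) • γ q.1 + q.2.2 • γ q.2.1 := by
  have hk : h / (2 * π) ≠ 0 := by positivity
  obtain ⟨a, rfl⟩ : ∃ a, x = R * a := ⟨x / R, by field_simp⟩
  obtain ⟨b, rfl⟩ : ∃ b, y = R * b := ⟨y / R, by field_simp⟩
  obtain ⟨Z, rfl⟩ : ∃ Z, z = h / (2 * π) * Z := ⟨z / (h / (2 * π)), by field_simp⟩
  have hab : a ^ 2 + b ^ 2 < 1 := by
    refine lt_of_mul_lt_mul_left ?_ (sq_nonneg R)
    linear_combination hp
  refine chordOfMidpoint.existsUnique_congr_right.1 <|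
    (existsUnique_congr fun p => ?_).1 (existsUnique_piLine_coords hab Z)
  obtain ⟨m, δ, u⟩ := p
  simp only [chordOfMidpoint, Equiv.coe_fn_mk, helix_chord_midpoint hγ, Prod.mk.injEq,
    mul_right_inj' hR.ne', mul_right_inj' hk, Set.mem_Ioo]
  refine and_congr ⟨?_, ?_⟩ Iff.rfl
  · rintro ⟨⟨h1, h2⟩, h3, h4⟩
    exact ⟨by linarith, by linarith, by linarith, by linarith⟩
  · rintro ⟨h1, h2, h3, h4⟩
    exact ⟨⟨by linarith, by linarith⟩, by linarith, by linarith⟩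
end

section
/- Let r̄ be a real number with 0 ≤ r̄ < 1 and let k ∈ ℤ. Then (1/2π)·∫_{−π}^{π} e^{−ikβ}/(1 + r̄² − 2r̄ cos β) dβ = r̄^{|k|}/(1 − r̄²). -/
/-!
For `‖r‖ < 1` the function `1 / (1 + r² - 2 r cos β)` is `(1 - r²)⁻¹` times the Poisson kernel
`∑ₙ r^|n| e^{inβ}`: summing the two geometric series in `r e^{iβ}` and `r e^{-iβ}` gives
`(1 - r²) / ((1 - r e^{iβ}) (1 - r e^{-iβ}))`, and the denominator is `1 + r² - 2 r cos β`.
The series is dominated by the summable `∑ₙ ‖r‖^|n|`, so it may be integrated term by term against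
`e^{-ikβ}`, and orthogonality of the exponentials on `[-π, π]` picks out the coefficient `r^|k|`.
-/

open Complex
open scoped Real

lemma summable_norm_pow_natAbs {𝕜 : Type*} [NormedDivisionRing 𝕜] {r : 𝕜} (hr : ‖r‖ < 1) :
    Summable fun n : ℤ => ‖r ^ n.natAbs‖ := by
  have hgeom := summable_geometric_of_lt_one (norm_nonneg r) hr
  simp only [norm_pow]
  refine .of_nat_of_neg_add_one (by simpa using hgeom) ?_
  simp only [Int.natAbs_neg]
  exact hgeom.comp_injective (add_left_injective 1)

lemma hasSum_pow_natAbs_mul_zpow {𝕜 : Type*} [NormedField 𝕜] [CompleteSpace 𝕜] {r z : 𝕜}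
    (hr : ‖r‖ < 1) (hz : ‖z‖ = 1) :
    HasSum (fun n : ℤ => r ^ n.natAbs * z ^ n)
      ((1 - r ^ 2) / ((1 - r * z) * (1 - r * z⁻¹))) := by
  have hrz : ‖r * z‖ < 1 := by rwa [norm_mul, hz, mul_one]
  have hrz' : ‖r * z⁻¹‖ < 1 := by rwa [norm_mul, norm_inv, hz, inv_one, mul_one]
  have hpos : HasSum (fun n : ℕ => r ^ (n : ℤ).natAbs * z ^ (n : ℤ)) (1 - r * z)⁻¹ := by
    simpa [mul_pow] using hasSum_geometric_of_norm_lt_one hrz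
  have hneg : HasSum (fun n : ℕ => r ^ (-(n + 1 : ℤ)).natAbs * z ^ (-(n + 1 : ℤ)))
      (r * z⁻¹ * (1 - r * z⁻¹)⁻¹) := by
    have hterm : ∀ n : ℕ, r ^ (-(n + 1 : ℤ)).natAbs * z ^ (-(n + 1 : ℤ)) =
        r * z⁻¹ * (r * z⁻¹) ^ n := by
      intro n
      rw [Int.natAbs_neg, zpow_neg, mul_pow, inv_pow]
      norm_cast
      ring
    simpa only [hterm] using (hasSum_geometric_of_norm_lt_one hrz').mul_left (r * z⁻¹)
  have h1 : 1 - r * z ≠ 0 := fun h => by simp [(sub_eq_zero.mp h).symm] at hrz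
  have h2 : 1 - r * z⁻¹ ≠ 0 := fun h => by simp [(sub_eq_zero.mp h).symm] at hrz'
  have hz0 : z ≠ 0 := norm_ne_zero_iff.mp (by simp [hz])
  convert HasSum.of_nat_of_neg_add_one (f := fun n : ℤ => r ^ n.natAbs * z ^ n) hpos hneg using 1
  rw [div_eq_iff (mul_ne_zero h1 h2), add_mul]
  linear_combination -(1 - r * z⁻¹) * mul_inv_cancel₀ h1 -
    r * z⁻¹ * (1 - r * z) * mul_inv_cancel₀ h2 + r ^ 2 * mul_inv_cancel₀ hz0

lemma hasSum_pow_natAbs_mul_exp {r : ℂ} (hr : ‖r‖ < 1) (β : ℝ) :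
    HasSum (fun n : ℤ => r ^ n.natAbs * exp (n * β * I))
      ((1 - r ^ 2) / (1 + r ^ 2 - 2 * r * cos β)) := by
  have hden : (1 - r * exp (β * I)) * (1 - r * (exp (β * I))⁻¹) =
      1 + r ^ 2 - 2 * r * cos β := by
    have hinv : exp (β * I) * (exp (β * I))⁻¹ = 1 := mul_inv_cancel₀ (exp_ne_zero _)
    rw [cos, neg_mul, exp_neg]
    linear_combination r ^ 2 * hinv
  rw [← hden]
  simpa only [← exp_int_mul, ← mul_assoc] using
    hasSum_pow_natAbs_mul_zpow hr (norm_exp_ofReal_mul_I β)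

lemma integral_exp_int_mul_mul_I (m : ℤ) :
    ∫ β in (-π)..π, exp (m * β * I) = if m = 0 then 2 * (π : ℂ) else 0 := by
  split_ifs with hm
  · simp [hm, two_mul]
  · have hmI : (m : ℂ) * I ≠ 0 := by simp [hm]
    have hperiod : exp (m * I * π) = exp (m * I * ↑(-π)) := by
      rw [exp_eq_exp_iff_exists_int]
      exact ⟨m, by push_cast; ring⟩
    simp_rw [mul_right_comm _ _ I]
    rw [integral_exp_mul_complex hmI, hperiod, sub_self, zero_div]

lemma integral_exp_neg_int_mul_of_hasSum {c : ℤ → ℂ} {f : ℝ → ℂ} (hc : Summable (‖c ·‖))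
    (hf : ∀ β : ℝ, HasSum (fun n : ℤ => c n * exp (n * β * I)) (f β)) (k : ℤ) :
    ∫ β in (-π)..π, exp (-I * k * β) * f β = 2 * π * c k := by
  have hterm : ∀ n : ℤ, ∫ β in (-π)..π, exp (-I * k * β) * (c n * exp (n * β * I)) =
      if n = k then 2 * π * c k else 0 := by
    intro n
    have hexp : ∀ β : ℝ, exp (-I * k * β) * (c n * exp (n * β * I)) =
        c n * exp ((n - k : ℤ) * β * I) := by
      intro β
      rw [mul_left_comm, ← exp_add]
      push_cast
      ring_nf
    simp_rw [hexp, intervalIntegral.integral_const_mul, integral_exp_int_mul_mul_I, sub_eq_zero]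
    split_ifs with h <;> simp [h, mul_comm]
  have hsum : HasSum (fun n : ℤ => ∫ β in (-π)..π, exp (-I * k * β) * (c n * exp (n * β * I)))
      (∫ β in (-π)..π, exp (-I * k * β) * f β) :=
    intervalIntegral.hasSum_integral_of_dominated_convergence (fun n _ => ‖c n‖)
      (fun n => by fun_prop) (fun n => .of_forall fun β _ => by simp [norm_exp])
      (.of_forall fun _ _ => hc) intervalIntegrable_const
      (.of_forall fun β _ => (hf β).mul_left _)
  simp only [hterm] at hsum
  exact hsum.unique (hasSum_ite_eq k _)

/-- The `k`-th Fourier coefficient of `g₃(β) = 1/(1 + r̄² − 2 r̄ cos β)`,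
for `0 ≤ r̄ < 1`, equals `r̄^{|k|}/(1 − r̄²)`. -/
theorem fourier_coeff_g3 (r : ℝ) (hr0 : 0 ≤ r) (hr1 : r < 1) (k : ℤ) :
    (1 / (2 * (Real.pi : ℂ))) *
        ∫ β in (-Real.pi)..Real.pi,
          Complex.exp (-Complex.I * (k : ℂ) * (β : ℂ)) /
            ((1 + r ^ 2 - 2 * r * Real.cos β : ℝ) : ℂ)
      = ((r ^ k.natAbs / (1 - r ^ 2) : ℝ) : ℂ) := by
  have hr : ‖(r : ℂ)‖ < 1 := by rwa [norm_real, Real.norm_of_nonneg hr0]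
  have h1r : (1 : ℂ) - r ^ 2 ≠ 0 := by
    exact_mod_cast (sub_pos.mpr (by nlinarith : r ^ 2 < 1)).ne'
  have hintegrand : ∀ β : ℝ, exp (-I * k * β) / ((1 + r ^ 2 - 2 * r * Real.cos β : ℝ) : ℂ) =
      (1 - (r : ℂ) ^ 2)⁻¹ *
        (exp (-I * k * β) * ((1 - (r : ℂ) ^ 2) / (1 + (r : ℂ) ^ 2 - 2 * r * cos β))) := by
    intro β
    push_cast
    field_simp
  simp only [hintegrand, intervalIntegral.integral_const_mul, integral_exp_neg_int_mul_of_hasSum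
    (summable_norm_pow_natAbs hr) (hasSum_pow_natAbs_mul_exp hr)]
  push_cast
  field_simp
end

section
/- Let r̄ be a real number with 0 ≤ r̄ < 1 and let n ∈ ℤ. Then the absolute value of (1/2π)·∫_{−π}^{π} (1 − r̄ cos β)·e^{−inβ}/(1 + r̄² − 2r̄ cos β) dβ equals 1 when n = 0, and equals r̄^{|n|}/2 when n ≠ 0. -/
open Complex intervalIntegral
open scoped Real
open MeasureTheory (volume)

/-! Since `r` is real, `g₅(β) = Re (1 - r e^{iβ})⁻¹ = ((1 - r e^{iβ})⁻¹ + (1 - r e^{-iβ})⁻¹) / 2`.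
Expanding `(1 - r e^{iβ})⁻¹ e^{-inβ}` as the geometric series `∑ₖ rᵏ e^{i(k-n)β}`, dominated by
`∑ₖ rᵏ`, and integrating termwise, only `k = n` survives; the second half is the reflection
`β ↦ -β` of the first, so it contributes only when `n ≤ 0`, with `r^{-n}`. -/

theorem Continuous.inv_one_sub {f : ℝ → ℂ} (hf : Continuous f) (hlt : ∀ x, ‖f x‖ < 1) :
    Continuous fun x => (1 - f x)⁻¹ :=
  (continuous_const.sub hf).inv₀ fun x h => (hlt x).ne' (by rw [← sub_eq_zero.mp h, norm_one])

theorem integral_exp_int_mul_I (m : ℤ) :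
    ∫ β in (-π)..π, exp (m * I * β) = if m = 0 then 2 * (π : ℂ) else 0 := by
  split_ifs with hm
  · simp [hm, two_mul]
  have hc : (m : ℂ) * I ≠ 0 := by simp [hm]
  have hperiodic : exp (m * I * π) = exp (m * I * (-π : ℝ)) := by
    calc exp (m * I * π) = exp (m * I * (-π : ℝ)) * exp (m * (2 * π * I)) := by
          rw [← exp_add]; push_cast; congr 1; ring
      _ = exp (m * I * (-π : ℝ)) := by rw [exp_int_mul_two_pi_mul_I, mul_one]
  rw [integral_exp_mul_complex hc, hperiodic, sub_self, zero_div]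

theorem norm_mul_exp_ofReal_mul_I (w : ℂ) (β : ℝ) : ‖w * exp (β * I)‖ = ‖w‖ := by
  rw [norm_mul, norm_exp_ofReal_mul_I, mul_one]

theorem hasSum_pow_mul_exp {w : ℂ} (hw : ‖w‖ < 1) (n : ℤ) (β : ℝ) :
    HasSum (fun k : ℕ => w ^ k * exp (((k - n : ℤ) : ℂ) * I * β))
      ((1 - w * exp (β * I))⁻¹ * exp (-I * n * β)) := by
  have hgeom := (hasSum_geometric_of_norm_lt_one
    ((norm_mul_exp_ofReal_mul_I w β).trans_lt hw)).mul_right (exp (-I * n * β))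
  refine hgeom.congr_fun fun k => ?_
  rw [mul_pow, ← exp_nat_mul, mul_assoc (w ^ k), ← exp_add]
  congr 2
  push_cast
  ring

theorem integral_inv_one_sub_mul_exp_mul_exp {w : ℂ} (hw : ‖w‖ < 1) (n : ℤ) :
    ∫ β in (-π)..π, (1 - w * exp (β * I))⁻¹ * exp (-I * n * β)
      = 2 * π * if 0 ≤ n then w ^ n.toNat else 0 := by
  have hterms : HasSum (fun k : ℕ => ∫ β in (-π)..π, w ^ k * exp (((k - n : ℤ) : ℂ) * I * β))
      (∫ β in (-π)..π, (1 - w * exp (β * I))⁻¹ * exp (-I * n * β)) := by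
    refine hasSum_integral_of_dominated_convergence (fun k _ => ‖w‖ ^ k)
      (fun k => (Continuous.aestronglyMeasurable (by fun_prop))) (fun k => ?_)
      (.of_forall fun _ _ => summable_geometric_of_lt_one (norm_nonneg w) hw)
      intervalIntegrable_const (.of_forall fun β _ => hasSum_pow_mul_exp hw n β)
    refine .of_forall fun β _ => ?_
    simp [norm_exp]
  simp only [integral_const_mul, integral_exp_int_mul_I, sub_eq_zero] at hterms
  refine hterms.unique ?_
  convert hasSum_single n.toNat _ using 1
  · split_ifs <;> first | omega | ring
  · intro k hk
    rw [if_neg (by omega), mul_zero]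

theorem integral_inv_one_sub_mul_exp_neg_mul_exp {w : ℂ} (hw : ‖w‖ < 1) (n : ℤ) :
    ∫ β in (-π)..π, (1 - w * exp (-(β * I)))⁻¹ * exp (-I * n * β)
      = 2 * π * if n ≤ 0 then w ^ (-n).toNat else 0 := by
  have hreflect := integral_comp_neg (a := -π) (b := π)
    fun β : ℝ => (1 - w * exp (β * I))⁻¹ * exp (-I * (-n : ℤ) * β)
  rw [neg_neg, integral_inv_one_sub_mul_exp_mul_exp hw] at hreflect
  simp only [neg_nonneg] at hreflect
  refine (integral_congr fun β _ => ?_).trans hreflect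
  push_cast
  ring_nf

theorem re_inv_one_sub_ofReal_mul_exp (r β : ℝ) :
    ((1 - r * exp (β * I))⁻¹).re = (1 - r * Real.cos β) / (1 + r ^ 2 - 2 * r * Real.cos β) := by
  simp only [inv_re, normSq_apply, sub_re, sub_im, one_re, one_im, re_ofReal_mul, im_ofReal_mul,
    exp_ofReal_mul_I_re, exp_ofReal_mul_I_im]
  congr 1
  linear_combination (r ^ 2) * Real.sin_sq_add_cos_sq β

theorem ofReal_one_sub_mul_cos_div (r β : ℝ) :
    (((1 - r * Real.cos β) / (1 + r ^ 2 - 2 * r * Real.cos β) : ℝ) : ℂ)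
      = ((1 - r * exp (β * I))⁻¹ + (1 - r * exp (-(β * I)))⁻¹) / 2 := by
  rw [← re_inv_one_sub_ofReal_mul_exp, re_eq_add_conj]
  simp [← exp_conj]

theorem ite_pow_toNat_add_ite_pow_neg_toNat {R : Type*} [Semiring R] (w : R) (n : ℤ) :
    ((if 0 ≤ n then w ^ n.toNat else 0) + if n ≤ 0 then w ^ (-n).toNat else 0)
      = if n = 0 then 2 else w ^ n.natAbs := by
  rcases lt_trichotomy n 0 with hn | rfl | hn
  · simp [hn.not_ge, hn.le, hn.ne, show (-n).toNat = n.natAbs by omega]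
  · norm_num
  · simp [hn.not_ge, hn.le, hn.ne', show n.toNat = n.natAbs by omega]

/-- The absolute value of the `n`-th Fourier coefficient of
`g₅(β) = (1 − r̄ cos β)/(1 + r̄² − 2 r̄ cos β)`, for `0 ≤ r̄ < 1`, equals `1`
when `n = 0` and `r̄^{|n|}/2` when `n ≠ 0`. -/
theorem fourier_coeff_g5_abs (r : ℝ) (hr0 : 0 ≤ r) (hr1 : r < 1) (n : ℤ) :
    Norm.norm
        ((1 / (2 * (Real.pi : ℂ))) *
          ∫ β in (-Real.pi)..Real.pi,
            ((1 - r * Real.cos β : ℝ) : ℂ) *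
              Complex.exp (-Complex.I * (n : ℂ) * (β : ℂ)) /
                ((1 + r ^ 2 - 2 * r * Real.cos β : ℝ) : ℂ))
      = if n = 0 then 1 else r ^ n.natAbs / 2 := by
  have hw : ‖(r : ℂ)‖ < 1 := by rwa [norm_real, Real.norm_of_nonneg hr0]
  have hsplit (β : ℝ) : ((1 - r * Real.cos β : ℝ) : ℂ) * exp (-I * n * β) /
        ((1 + r ^ 2 - 2 * r * Real.cos β : ℝ) : ℂ)
      = ((1 - r * exp (β * I))⁻¹ * exp (-I * n * β)
          + (1 - r * exp (-(β * I)))⁻¹ * exp (-I * n * β)) / 2 := by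
    rw [mul_div_right_comm, ← ofReal_div, ofReal_one_sub_mul_cos_div]
    ring
  have hint₁ : IntervalIntegrable (fun β : ℝ => (1 - r * exp (β * I))⁻¹ * exp (-I * n * β))
      volume (-π) π :=
    ((Continuous.inv_one_sub (by fun_prop) fun β => by simpa [norm_exp] using hw).mul
      (by fun_prop)).intervalIntegrable _ _
  have hint₂ : IntervalIntegrable (fun β : ℝ => (1 - r * exp (-(β * I)))⁻¹ * exp (-I * n * β))
      volume (-π) π :=
    ((Continuous.inv_one_sub (by fun_prop) fun β => by simpa [norm_exp] using hw).mul
      (by fun_prop)).intervalIntegrable _ _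
  rw [integral_congr fun β _ => hsplit β, integral_div, integral_add hint₁ hint₂,
    integral_inv_one_sub_mul_exp_mul_exp hw, integral_inv_one_sub_mul_exp_neg_mul_exp hw, ← mul_add, ite_pow_toNat_add_ite_pow_neg_toNat, mul_div_assoc', ← mul_assoc,
    one_div_mul_cancel (by simp [Real.pi_ne_zero]), one_mul]
  split_ifs
  · norm_num
  · simp [abs_of_nonneg hr0]
end

section
/- Let B > 0 and W > 0. Then ∫_{−W}^{W} (4/ω⁴)·(ωB·cos(Bω) − sin(Bω))² dω = 4B³·[ (2/3)·∫_{0}^{2WB} (sin x / x) dx + (2WB·sin(2WB) + (1 + W²B²)·cos(2WB) − 1 − 3W²B²)/(3·(WB)³) ]. -/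
/-!
The substitution `u = Bω` scales the integral by `B³` and reduces it to `B = 1`. Put
`q u = (sin u - u cos u) / u²` and let `G u` be the closed-form summand of the right-hand
side with `WB` replaced by `u`. Then the integrand is `4 q²` and
`G u = -(2/3) u (q² + 2 sinc² u)`; since `|sin u - u cos u| ≤ |u|³`, both are continuous
across `u = 0`. Away from `0` one computes
`4 q² = 2 G' + (8/3) sinc (2u)`, so `F u = 2 G u + (4/3) ∫₀^{2u} sinc` is an odd antiderivative
of the integrand, continuous on all of `ℝ`, and the integral over `[-T, T]` equals `2 F T`.
-/

open Real MeasureTheory intervalIntegral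

namespace Real

theorem abs_sin_sub_mul_cos_le (u : ℝ) : |sin u - u * cos u| ≤ |u| ^ 3 := by
  have hderiv (t : ℝ) : HasDerivAt (fun t => sin t - t * cos t) (t * sin t) t :=
    ((hasDerivAt_sin t).sub ((hasDerivAt_id' t).mul (hasDerivAt_cos t))).congr_deriv
      (by ring)
  have hbound : ∀ t ∈ Set.uIcc 0 u, ‖t * sin t‖ ≤ u ^ 2 := fun t ht => by
    have ht : |t| ≤ |u| := by simpa using Set.abs_sub_left_of_mem_uIcc ht
    calc ‖t * sin t‖ = |t| * |sin t| := abs_mul t _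
      _ ≤ |u| * |u| := mul_le_mul ht (abs_sin_le_abs.trans ht) (abs_nonneg _) (abs_nonneg _)
      _ = u ^ 2 := by rw [← sq, sq_abs]
  have := (convex_uIcc 0 u).norm_image_sub_le_of_norm_hasDerivWithin_le
    (fun t _ => (hderiv t).hasDerivWithinAt) hbound Set.left_mem_uIcc Set.right_mem_uIcc
  simpa [pow_succ, ← sq_abs u] using this

theorem continuous_sin_sub_mul_cos_div_sq :
    Continuous fun u : ℝ => (sin u - u * cos u) / u ^ 2 := by
  refine continuous_iff_continuousAt.2 fun x => ?_
  rcases eq_or_ne x 0 with rfl | hx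
  · have h0 : (sin 0 - 0 * cos 0) / (0 : ℝ) ^ 2 = 0 := by simp
    rw [ContinuousAt, h0]
    refine squeeze_zero_norm (a := fun u : ℝ => |u|) (fun u => ?_) ?_
    · rcases eq_or_ne u 0 with rfl | hu
      · simp
      rw [norm_div, norm_pow, Real.norm_eq_abs, Real.norm_eq_abs,
        div_le_iff₀ (by positivity), ← pow_succ']
      exact abs_sin_sub_mul_cos_le u
    · simpa using (continuous_abs.tendsto (0 : ℝ))
  · exact ContinuousAt.div (by fun_prop) (by fun_prop) (pow_ne_zero 2 hx)

theorem integral_sinc_neg (x : ℝ) :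
    ∫ t in (0 : ℝ)..(-x), sinc t = -∫ t in (0 : ℝ)..x, sinc t := by
  have := integral_comp_neg (a := 0) (b := x) sinc
  simp only [sinc_neg, neg_zero] at this
  rw [this, integral_symm]

theorem hasDerivAt_integral_sinc (x : ℝ) :
    HasDerivAt (fun x => ∫ t in (0 : ℝ)..x, sinc t) (sinc x) x :=
  (continuous_sinc.integral_hasStrictDerivAt 0 x).hasDerivAt

theorem integral_sin_div_eq_integral_sinc (a b : ℝ) :
    ∫ x in a..b, sin x / x = ∫ x in a..b, sinc x :=
  integral_congr_ae <| (Measure.ae_ne volume 0).mono fun _ hx _ => (sinc_of_ne_zero hx).symm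

end Real

/-- `|𝓕(β ↦ β·1_{[-B,B]}(β))(ω)|²`; at `ω = 0` the junk value `4 / 0 = 0` is also its limit. -/
noncomputable def energyDensity (B ω : ℝ) : ℝ :=
  (4 / ω ^ 4) * (ω * B * cos (B * ω) - sin (B * ω)) ^ 2

noncomputable def energyCorrection (u : ℝ) : ℝ :=
  (2 * u * sin (2 * u) + (1 + u ^ 2) * cos (2 * u) - 1 - 3 * u ^ 2) / (3 * u ^ 3)

theorem energyDensity_eq_mul_energyDensity_one (B ω : ℝ) :
    energyDensity B ω = B ^ 4 * energyDensity 1 (B * ω) := by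
  rcases eq_or_ne B 0 with rfl | hB
  · simp [energyDensity]
  simp only [energyDensity, one_mul, mul_one]
  field_simp

theorem energyDensity_one_eq (u : ℝ) :
    energyDensity 1 u = 4 * ((sin u - u * cos u) / u ^ 2) ^ 2 := by
  simp only [energyDensity, one_mul, mul_one]
  ring

theorem continuous_energyDensity_one : Continuous (energyDensity 1) := by
  simp only [funext energyDensity_one_eq]
  exact continuous_const.mul (continuous_sin_sub_mul_cos_div_sq.pow 2)

theorem energyCorrection_eq (u : ℝ) :
    energyCorrection u
      = -(2 / 3) * u * (((sin u - u * cos u) / u ^ 2) ^ 2 + 2 * sinc u ^ 2) := by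
  rcases eq_or_ne u 0 with rfl | hu
  · simp [energyCorrection]
  have hnum : 2 * u * sin (2 * u) + (1 + u ^ 2) * cos (2 * u) - 1 - 3 * u ^ 2
      = -2 * (sin u - u * cos u) ^ 2 - 4 * u ^ 2 * sin u ^ 2 := by
    rw [sin_two_mul, cos_two_mul]
    linear_combination (2 + 4 * u ^ 2) * sin_sq_add_cos_sq u
  rw [energyCorrection, hnum, sinc_of_ne_zero hu]
  field_simp
  ring

theorem continuous_energyCorrection : Continuous energyCorrection := by
  simp only [funext energyCorrection_eq]
  have := continuous_sin_sub_mul_cos_div_sq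
  fun_prop

theorem energyCorrection_neg (u : ℝ) : energyCorrection (-u) = -energyCorrection u := by
  simp only [energyCorrection, mul_neg, sin_neg, cos_neg]
  ring

theorem hasDerivAt_energyCorrection {u : ℝ} (hu : u ≠ 0) :
    HasDerivAt energyCorrection (energyDensity 1 u / 2 - 4 / 3 * sinc (2 * u)) u := by
  have h2u : HasDerivAt (fun y : ℝ => 2 * y) 2 u := by
    simpa using (hasDerivAt_id' u).const_mul (2 : ℝ)
  have hnum := ((((h2u.mul h2u.sin).add
    (((hasDerivAt_pow 2 u).const_add 1).mul h2u.cos)).sub_const 1).sub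
      ((hasDerivAt_pow 2 u).const_mul 3))
  have hquot := hnum.div ((hasDerivAt_pow 3 u).const_mul 3) (by positivity)
  refine hquot.congr_deriv ?_
  have hsq : (u * cos u - sin u) ^ 2
      = u ^ 2 * (1 + cos (2 * u)) / 2 - u * sin (2 * u) + (1 - cos (2 * u)) / 2 := by
    rw [sin_two_mul, cos_two_mul]
    linear_combination sin_sq_add_cos_sq u
  rw [sinc_of_ne_zero (mul_ne_zero two_ne_zero hu)]
  simp only [energyDensity, one_mul, mul_one, hsq, Pi.add_apply, Pi.mul_apply, Pi.sub_apply,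
    Nat.cast_ofNat]
  field_simp
  ring

theorem integral_energyDensity_one (T : ℝ) :
    ∫ u in (-T)..T, energyDensity 1 u
      = 4 * ((2 / 3) * (∫ x in (0 : ℝ)..(2 * T), sinc x) + energyCorrection T) := by
  have hSi (u : ℝ) :
      HasDerivAt (fun u => ∫ x in (0 : ℝ)..(2 * u), sinc x) (2 * sinc (2 * u)) u :=
    ((hasDerivAt_integral_sinc (2 * u)).comp u ((hasDerivAt_id' u).const_mul 2)).congr_deriv
      (by ring)
  set F : ℝ → ℝ := fun u => 2 * energyCorrection u + 4 / 3 * ∫ x in (0 : ℝ)..(2 * u), sinc x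
  have hF_cont : Continuous F :=
    (continuous_const.mul continuous_energyCorrection).add
      (continuous_const.mul (continuous_iff_continuousAt.2 fun u => (hSi u).continuousAt))
  have hF_deriv (u : ℝ) (hu : u ≠ 0) : HasDerivAt F (energyDensity 1 u) u :=
    (((hasDerivAt_energyCorrection hu).const_mul 2).add
      ((hSi u).const_mul (4 / 3))).congr_deriv (by ring)
  have hF_neg (u : ℝ) : F (-u) = -F u := by
    simp only [F, energyCorrection_neg, mul_neg, integral_sinc_neg]
    ring
  rw [integral_eq_of_hasDerivAt_off_countable F _ (Set.countable_singleton 0)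
    hF_cont.continuousOn (fun u hu => hF_deriv u hu.2)
    (continuous_energyDensity_one.intervalIntegrable _ _), hF_neg]
  ring

theorem integral_energyDensity {B : ℝ} (hB : B ≠ 0) (W : ℝ) :
    ∫ ω in (-W)..W, energyDensity B ω
      = B ^ 3 * ∫ u in (-(B * W))..(B * W), energyDensity 1 u := by
  simp only [energyDensity_eq_mul_energyDensity_one B, intervalIntegral.integral_const_mul]
  rw [integral_comp_mul_left (energyDensity 1) hB, smul_eq_mul, mul_neg]
  field_simp

theorem banded_energy_fourier_beta_indicator_general (B W : ℝ) (hB : 0 < B) :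
    ∫ ω in (-W)..W, (4 / ω ^ 4) * (ω * B * Real.cos (B * ω) - Real.sin (B * ω)) ^ 2
      = 4 * B ^ 3 *
          ((2 / 3) * (∫ x in (0 : ℝ)..(2 * W * B), Real.sin x / x) +
            (2 * W * B * Real.sin (2 * W * B) +
              (1 + W ^ 2 * B ^ 2) * Real.cos (2 * W * B) - 1 - 3 * W ^ 2 * B ^ 2) /
              (3 * (W * B) ^ 3)) := by
  calc _ = ∫ ω in (-W)..W, energyDensity B ω := rfl
    _ = B ^ 3 * ∫ u in (-(B * W))..(B * W), energyDensity 1 u := integral_energyDensity hB.ne' W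
    _ = _ := by
      rw [integral_energyDensity_one, energyCorrection, show 2 * W * B = 2 * (B * W) by ring,
        integral_sin_div_eq_integral_sinc]
      ring

/-- The band-limited energy of the Fourier transform of `β ↦ β·I_B(β)`:
`∫_{−W}^{W} (4/ω⁴)(ωB cos(Bω) − sin(Bω))² dω` expressed via the sine integral. -/
theorem banded_energy_fourier_beta_indicator (B W : ℝ) (hB : 0 < B) (hW : 0 < W) :
    ∫ ω in (-W)..W, (4 / ω ^ 4) * (ω * B * Real.cos (B * ω) - Real.sin (B * ω)) ^ 2
      = 4 * B ^ 3 *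
          ((2 / 3) * (∫ x in (0 : ℝ)..(2 * W * B), Real.sin x / x) +
            (2 * W * B * Real.sin (2 * W * B) +
              (1 + W ^ 2 * B ^ 2) * Real.cos (2 * W * B) - 1 - 3 * W ^ 2 * B ^ 2) /
              (3 * (W * B) ^ 3)) :=
  banded_energy_fourier_beta_indicator_general B W hB
end

section
/- Let Ω, R, ρ, D, D_W, W_v be positive real numbers. Let M be the 3×3 real matrix with rows (Ω(R+ρ), 2ΩR, −2ΩR), (Ωρ + D, −D, D), (W_v, W_v, W_v), and let U = π·diag(1/(Ω(R+ρ)), 1/(Ωρ + D_W), 1/W_v). Then the sampling-rate gain ratio ((2π)³/|det M|) / det U equals 4(R+ρ)(Ωρ + D_W)/(2RΩρ + (3R+ρ)D). -/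
/-! The efficient sampling matrix `M` has determinant `-2ΩW_v(2RΩρ + (3R+ρ)D)` and the
uniform one `U` is diagonal, so the ratio is a quotient of two explicit monomials in which
`Ω`, `W_v` and `π³` cancel. -/

theorem Matrix.det_fin_three_diagonal {R : Type*} [CommRing R] (a b c : R) :
    Matrix.det !![a, 0, 0; 0, b, 0; 0, 0, c] = a * b * c := by
  simp [Matrix.det_fin_three]

theorem det_efficientSamplingMatrix (Ω R ρ D Wv : ℝ) :
    Matrix.det !![Ω * (R + ρ), 2 * Ω * R, -(2 * Ω * R);
                  Ω * ρ + D, -D, D;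
                  Wv, Wv, Wv]
      = -(2 * Ω * Wv * (2 * R * Ω * ρ + (3 * R + ρ) * D)) := by
  simp only [Matrix.det_fin_three, Fin.isValue, Matrix.of_apply, Matrix.cons_val',
    Matrix.cons_val_zero, Matrix.cons_val_fin_one, Matrix.cons_val_one, mul_neg,
    Matrix.cons_val, neg_mul, neg_neg]
  ring

theorem sampling_gain_ratio_general (Ω R ρ D DW Wv : ℝ)
    (hΩ : 0 < Ω) (hR : 0 < R) (hρ : 0 < ρ) (hD : 0 < D)
    (hWv : 0 < Wv)
    (M U : Matrix (Fin 3) (Fin 3) ℝ)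
    (hM : M = !![Ω * (R + ρ), 2 * Ω * R, -(2 * Ω * R);
                 Ω * ρ + D, -D, D;
                 Wv, Wv, Wv])
    (hU : U = !![Real.pi / (Ω * (R + ρ)), 0, 0;
                 0, Real.pi / (Ω * ρ + DW), 0;
                 0, 0, Real.pi / Wv]) :
    ((2 * Real.pi) ^ 3 / |Matrix.det M|) / Matrix.det U
      = 4 * (R + ρ) * (Ω * ρ + DW) / (2 * R * Ω * ρ + (3 * R + ρ) * D) := by
  have hS : 0 < 2 * R * Ω * ρ + (3 * R + ρ) * D := by positivity
  have hdetM : |M.det| = 2 * Ω * Wv * (2 * R * Ω * ρ + (3 * R + ρ) * D) := by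
    rw [hM, det_efficientSamplingMatrix, abs_neg, abs_of_pos (by positivity)]
  have hdetU : U.det = Real.pi ^ 3 / (Ω * (R + ρ) * (Ω * ρ + DW) * Wv) := by
    rw [hU, Matrix.det_fin_three_diagonal, div_mul_div_comm, div_mul_div_comm]
    ring
  have hπ := Real.pi_pos
  rw [hdetM, hdetU, div_div_eq_mul_div]
  field_simp
  ring

/-- The sampling-rate gain ratio `det(T)/det(U)` between the efficient
sampling lattice `T` (with `|det T| = (2π)³/|det M|`) and the standard uniform
sampling lattice `U` equals `4(R+ρ)(Ωρ + D_W)/(2RΩρ + (3R+ρ)D)`. -/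
theorem sampling_gain_ratio (Ω R ρ D DW Wv : ℝ)
    (hΩ : 0 < Ω) (hR : 0 < R) (hρ : 0 < ρ) (hD : 0 < D) (hDW : 0 < DW)
    (hWv : 0 < Wv)
    (M U : Matrix (Fin 3) (Fin 3) ℝ)
    (hM : M = !![Ω * (R + ρ), 2 * Ω * R, -(2 * Ω * R);
                 Ω * ρ + D, -D, D;
                 Wv, Wv, Wv])
    (hU : U = !![Real.pi / (Ω * (R + ρ)), 0, 0;
                 0, Real.pi / (Ω * ρ + DW), 0;
                 0, 0, Real.pi / Wv]) :
    ((2 * Real.pi) ^ 3 / |Matrix.det M|) / Matrix.det U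
      = 4 * (R + ρ) * (Ω * ρ + DW) / (2 * R * Ω * ρ + (3 * R + ρ) * D) :=
  sampling_gain_ratio_general Ω R ρ D DW Wv hΩ hR hρ hD hWv M U hM hU
end
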